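/- Let s be an even positive integer. For every nonnegative integer n, cs_s(n) = dd_s(2n) + dd_s(2n − s), where dd_s(m)=0 for m<0. -/

import Mathlib

/-- A strict partition, encoded as a strictly decreasing list of positive integers. -/
def IsStrictPartition (l : List ℕ) : Prop :=
  List.Pairwise (· > ·) l ∧ ∀ x ∈ l, 0 < x

/-- The set of bar lengths in the (0-indexed) `i`-th row of a strict partition `l`:
`{λᵢ + λⱼ : i < j ≤ ℓ} ∪ ({1,…,λᵢ} \ {λᵢ − λⱼ : i < j ≤ ℓ})`. -/
def barLengths (l : List ℕ) (i : ℕ) : Finset ℕ :=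
  ((Finset.Ioo i l.length).image fun j => l.getD i 0 + l.getD j 0) ∪
    (Finset.Icc 1 (l.getD i 0) \
      ((Finset.Ioo i l.length).image fun j => l.getD i 0 - l.getD j 0))

/-- `l` is an `s`-bar-core: `s` is not a bar length in any row. -/
def IsBarCore (l : List ℕ) (s : ℕ) : Prop :=
  ∀ i, i < l.length → s ∉ barLengths l i

/-- The shifted hook length of the box in row `i`, column `c` (both 0-indexed, where the
`i`-th row of the shifted Young diagram occupies columns `i, …, λᵢ + i − 1`): the number of
boxes to its right in row `i` together with itself, plus the number of boxes below it in
column `c`, plus the number of boxes of row `c + 1` if that row exists. -/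
def shiftedHook (l : List ℕ) (i c : ℕ) : ℕ :=
  (l.getD i 0 + i - c) +
    ((Finset.Ioc i c).filter fun i' => c < l.getD i' 0 + i').card +
    l.getD (c + 1) 0

/-- `l` is an `s`-CSYD: no shifted hook length of the shifted Young diagram `S(λ)`
is divisible by `s`. -/
def IsCSYD (l : List ℕ) (s : ℕ) : Prop :=
  ∀ i c, i < l.length → i ≤ c → c < l.getD i 0 + i → ¬ s ∣ shiftedHook l i c

/-- The `i`-th part (0-indexed) of the doubled distinct partition `λλ`, read off from the
Frobenius symbol `(λ₁,…,λ_ℓ ; λ₁−1,…,λ_ℓ−1)`: for `i < ℓ` the part is `λᵢ + i + 1`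
(1-indexed: `λᵢ + i`), and for `ℓ ≤ i` the part is determined by the column lengths
`λⱼ + j − 1` (1-indexed). -/
def ddPart (l : List ℕ) (i : ℕ) : ℕ :=
  if i < l.length then l.getD i 0 + i + 1
  else ((Finset.range l.length).filter fun j => i + 1 ≤ l.getD j 0 + j).card

/-- The doubled distinct partition `λλ` of a strict partition `l`, as a list of parts. -/
def doubledDistinct (l : List ℕ) : List ℕ :=
  (List.range (l.getD 0 0)).map (ddPart l)

/-- Ordinary hook length of the box in row `i`, column `j` (0-indexed) of a partition `m`. -/
def hookLen (m : List ℕ) (i j : ℕ) : ℕ :=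
  (m.getD i 0 - j) + ((Finset.Ioo i m.length).filter fun i' => j < m.getD i' 0).card

/-- `m` is an `s`-core: no hook length is divisible by `s`. -/
def IsCore (m : List ℕ) (s : ℕ) : Prop :=
  ∀ i j, i < m.length → j < m.getD i 0 → ¬ s ∣ hookLen m i j

/-- NE lattice paths from `(0,0)` to `(a,b)`, encoded as lists of steps where
`false` is an east step `E = (1,0)` and `true` is a north step `N = (0,1)`. -/
def NEPaths (a b : ℕ) : Set (List Bool) :=
  {w | w.count false = a ∧ w.count true = b}

/-- A step of a free Motzkin path. -/
inductive MStep : Type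
  | U : MStep
  | F : MStep
  | D : MStep
deriving DecidableEq

/-- The height change of a step: `U = (1,1)`, `F = (1,0)`, `D = (1,−1)`. -/
def MStep.ht : MStep → ℤ
  | .U => 1
  | .F => 0
  | .D => -1

/-- Free Motzkin paths of type `(p,q)`: lattice paths from `(0,0)` to `(p,q)` with steps
`U = (1,1)`, `F = (1,0)` and `D = (1,−1)`, encoded as lists of steps. -/
def FreeMotzkin (p : ℕ) (q : ℤ) : Set (List MStep) :=
  {w | w.length = p ∧ (w.map MStep.ht).sum = q}

/-- `multinom n a b c = n! / (a! · b! · c!)`. -/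
def multinom (n a b c : ℕ) : ℕ :=
  n.factorial / (a.factorial * b.factorial * c.factorial)


/-! ### Auxiliary development -/

namespace CSYDProof

open Finset

/-- Segment lemma: a downward-closed predicate on `Ioo i L` holds exactly on `Ioc i (i+g)`
where `g` is the number of indices satisfying it. -/
lemma seg {i L g : ℕ} (Q : ℕ → Prop) [DecidablePred Q]
    (mono : ∀ j k, i < j → j ≤ k → k < L → Q k → Q j)
    (hg : g = ((Finset.Ioo i L).filter Q).card) :
    ∀ j, i < j → j < L → (Q j ↔ j ≤ i + g) := by
  intro j hij hjL
  constructor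
  · intro hQ
    have hsub : Finset.Ioc i j ⊆ (Finset.Ioo i L).filter Q := by
      intro k hk
      simp only [Finset.mem_Ioc] at hk
      simp only [Finset.mem_filter, Finset.mem_Ioo]
      exact ⟨⟨hk.1, lt_of_le_of_lt hk.2 hjL⟩, mono k j hk.1 hk.2 hjL hQ⟩
    have := Finset.card_le_card hsub
    rw [Nat.card_Ioc] at this
    omega
  · intro hle
    by_contra hQ
    have hsub : (Finset.Ioo i L).filter Q ⊆ Finset.Ioo i j := by
      intro k hk
      simp only [Finset.mem_filter, Finset.mem_Ioo] at hk
      simp only [Finset.mem_Ioo]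
      refine ⟨hk.1.1, ?_⟩
      by_contra hkj
      exact hQ (mono j k hij (by omega) hk.1.2 hk.2)
    have := Finset.card_le_card hsub
    rw [Nat.card_Ioo] at this
    omega

section Basics

variable {l : List ℕ}

lemma part_pos (hl : IsStrictPartition l) {i : ℕ} (hi : i < l.length) : 0 < l.getD i 0 := by
  apply hl.2
  rw [List.getD_eq_getElem l 0 hi]
  exact List.getElem_mem hi

lemma part_lt (hl : IsStrictPartition l) {i j : ℕ} (hij : i < j) (hj : j < l.length) :
    l.getD j 0 < l.getD i 0 := by
  rw [List.getD_eq_getElem l 0 hj, List.getD_eq_getElem l 0 (lt_trans hij hj)]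
  exact (List.pairwise_iff_getElem.mp hl.1) i j (lt_trans hij hj) hj hij

/-- Gap estimate: `λⱼ + (j − i) ≤ λᵢ` for `i ≤ j < ℓ`. -/
lemma part_gap (hl : IsStrictPartition l) {i j : ℕ} (hij : i ≤ j) (hj : j < l.length) :
    l.getD j 0 + (j - i) ≤ l.getD i 0 := by
  induction j with
  | zero =>
    have : i = 0 := by omega
    subst this; simp
  | succ k ih =>
    rcases Nat.eq_or_lt_of_le hij with h | h
    · subst h; simp
    · have h1 : l.getD (k+1) 0 < l.getD k 0 := part_lt hl (Nat.lt_succ_self k) hj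
      have h2 := ih (by omega) (by omega)
      omega

lemma beta_mono (hl : IsStrictPartition l) {i j : ℕ} (hij : i ≤ j) (hj : j < l.length) :
    l.getD j 0 + j ≤ l.getD i 0 + i := by
  have := part_gap hl hij hj
  omega

lemma len_le_beta (hl : IsStrictPartition l) {j : ℕ} (hj : j < l.length) : l.length ≤ l.getD j 0 + j := by
  have h1 := part_gap hl (le_refl j) hj
  have h2 : l.getD (l.length - 1) 0 + (l.length - 1 - j) ≤ l.getD j 0 :=
    part_gap hl (by omega) (by omega)
  have h3 : 0 < l.getD (l.length - 1) 0 := part_pos hl (by omega)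
  omega

lemma beta_le_head (hl : IsStrictPartition l) {j : ℕ} (hj : j < l.length) : l.getD j 0 + j ≤ l.getD 0 0 :=
  beta_mono hl (Nat.zero_le j) hj

lemma mem_iff_part {x : ℕ} : x ∈ l ↔ ∃ i, i < l.length ∧ l.getD i 0 = x := by
  constructor
  · intro hx
    rcases List.getElem_of_mem hx with ⟨i, hi, he⟩
    exact ⟨i, hi, by rw [List.getD_eq_getElem l 0 hi]; exact he⟩
  · rintro ⟨i, hi, rfl⟩
    rw [List.getD_eq_getElem l 0 hi]
    exact List.getElem_mem hi

lemma part_lt_iff (hl : IsStrictPartition l) {i j : ℕ} (hi : i < l.length) (hj : j < l.length) :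
    l.getD j 0 < l.getD i 0 ↔ i < j := by
  constructor
  · intro h
    by_contra hij
    have : i = j ∨ j < i := by omega
    rcases this with rfl | hji
    · omega
    · exact absurd (part_lt hl hji hi) (by omega)
  · intro h; exact part_lt hl h hj

end Basics

end CSYDProof

namespace CSYDProof

open Finset

variable {l : List ℕ}

/-- The "no bar length divisible by s" condition, phrased via parts. -/
def NBarP (l : List ℕ) (s : ℕ) : Prop :=
  (∀ x ∈ l, ∀ y ∈ l, y < x → ¬ s ∣ (x + y)) ∧
  (∀ x ∈ l, ∀ b, 1 ≤ b → b ≤ x → (∀ y ∈ l, y < x → x - y ≠ b) → ¬ s ∣ b)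

lemma getD_zero {j : ℕ} (hj : l.length ≤ j) : l.getD j 0 = 0 :=
  List.getD_eq_default l 0 hj

/-- Case A: shifted hook with row `c+1` existing is `λᵢ + λ_{c+1}`. -/
lemma shA (hl : IsStrictPartition l) {i c : ℕ} (hic : i ≤ c) (hc : c + 1 < l.length) :
    shiftedHook l i c = l.getD i 0 + l.getD (c + 1) 0 := by
  have hgap : ∀ i', i' ≤ c + 1 → l.getD (c+1) 0 + (c + 1 - i') ≤ l.getD i' 0 :=
    fun i' h => part_gap hl h hc
  have hpos : 0 < l.getD (c+1) 0 := part_pos hl hc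
  unfold shiftedHook
  have hfil : (Finset.Ioc i c).filter (fun i' => c < l.getD i' 0 + i') = Finset.Ioc i c := by
    apply Finset.filter_true_of_mem
    intro i' hi'
    simp only [Finset.mem_Ioc] at hi'
    have := hgap i' (by omega)
    omega
  rw [hfil, Nat.card_Ioc]
  have := hgap i (by omega)
  omega

/-- Case B: shifted hook in the tail region. -/
lemma shB {i c : ℕ} (hic : i ≤ c) (hcL : l.length ≤ c + 1) :
    shiftedHook l i c = (l.getD i 0 + i - c) +
      ((Finset.Ioo i l.length).filter (fun j => c < l.getD j 0 + j)).card := by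
  unfold shiftedHook
  have hfil : (Finset.Ioc i c).filter (fun j => c < l.getD j 0 + j)
      = (Finset.Ioo i l.length).filter (fun j => c < l.getD j 0 + j) := by
    ext j
    simp only [Finset.mem_filter, Finset.mem_Ioc, Finset.mem_Ioo]
    constructor
    · rintro ⟨⟨h1, h2⟩, h3⟩
      refine ⟨⟨h1, ?_⟩, h3⟩
      by_contra hL
      rw [getD_zero (by omega)] at h3
      omega
    · rintro ⟨⟨h1, h2⟩, h3⟩
      exact ⟨⟨h1, by omega⟩, h3⟩
  rw [hfil, getD_zero (by omega : l.length ≤ c + 1)]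
  omega

lemma nbarp_to_csyd (hl : IsStrictPartition l) {s : ℕ} (h : NBarP l s) : IsCSYD l s := by
  intro i c hi hic hc
  by_cases hcase : c + 1 < l.length
  · rw [shA hl hic hcase]
    exact h.1 _ (mem_iff_part.mpr ⟨i, hi, rfl⟩) _ (mem_iff_part.mpr ⟨c+1, hcase, rfl⟩)
      (part_lt hl (by omega) hcase)
  · have hcL : l.length ≤ c + 1 := by omega
    rw [shB hic hcL]
    set g := ((Finset.Ioo i l.length).filter (fun j => c < l.getD j 0 + j)).card with hg
    have hseg := seg (fun j => c < l.getD j 0 + j)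
      (fun j k hj hjk hk hQ => by have := beta_mono hl hjk hk; omega) hg
    have hgle : g ≤ c - i := by
      have h1 : g ≤ (Finset.Ioo i l.length).card := Finset.card_le_card (Finset.filter_subset _ _)
      rw [Nat.card_Ioo] at h1
      omega
    apply h.2 _ (mem_iff_part.mpr ⟨i, hi, rfl⟩) _ (by omega) (by omega)
    intro y hy hylt
    obtain ⟨j, hj, rfl⟩ := mem_iff_part.mp hy
    have hij : i < j := (part_lt_iff hl hi hj).mp hylt
    intro heq
    have hyval : l.getD j 0 + (l.getD i 0 + i - c + g) = l.getD i 0 := by omega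
    have hQiff := hseg j hij hj
    by_cases hjg : j ≤ i + g
    · have := hQiff.mpr hjg
      omega
    · have : ¬ (c < l.getD j 0 + j) := fun hq => hjg (hQiff.mp hq)
      omega

lemma csyd_to_nbarp (hl : IsStrictPartition l) {s : ℕ} (h : IsCSYD l s) : NBarP l s := by
  constructor
  · intro x hx y hy hxy
    obtain ⟨i, hi, rfl⟩ := mem_iff_part.mp hx
    obtain ⟨j, hj, rfl⟩ := mem_iff_part.mp hy
    have hij : i < j := (part_lt_iff hl hi hj).mp hxy
    have hgap := part_gap hl (le_of_lt hij) hj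
    have hjpos : 0 < l.getD j 0 := part_pos hl hj
    have hj1 : j - 1 + 1 = j := by omega
    have := h i (j-1) hi (by omega) (by omega)
    rw [shA hl (by omega) (by omega), hj1] at this
    exact this
  · intro x hx b hb1 hbx hdiff
    obtain ⟨i, hi, rfl⟩ := mem_iff_part.mp hx
    set xL := l.getD i 0 with hxL
    set d := xL - b with hd
    set g := ((Finset.Ioo i l.length).filter (fun j => d < l.getD j 0)).card with hg
    set c := d + i + g with hc
    -- parts strictly between i and length are < xL and ≠ d
    have hlt : ∀ j ∈ Finset.Ioo i l.length, l.getD j 0 < xL := by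
      intro j hj
      simp only [Finset.mem_Ioo] at hj
      exact part_lt hl hj.1 hj.2
    have hned : ∀ j ∈ Finset.Ioo i l.length, l.getD j 0 ≠ d := by
      intro j hj heq
      simp only [Finset.mem_Ioo] at hj
      have hyl : l.getD j 0 ∈ l := mem_iff_part.mpr ⟨j, hj.2, rfl⟩
      have := hdiff _ hyl (part_lt hl hj.1 hj.2)
      omega
    have hinj : ∀ j k : ℕ, j ∈ Finset.Ioo i l.length → k ∈ Finset.Ioo i l.length →
        l.getD j 0 = l.getD k 0 → j = k := by
      intro j k hj hk heq
      simp only [Finset.mem_Ioo] at hj hk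
      by_contra hne
      rcases Nat.lt_or_ge j k with hlt' | hge
      · have := part_lt hl hlt' hk.2; omega
      · have : k < j := by omega
        have := part_lt hl this hj.2; omega
    -- f1 : g ≤ b - 1
    have hf1 : g + 1 ≤ b := by
      have hmap : ∀ j ∈ (Finset.Ioo i l.length).filter (fun j => d < l.getD j 0),
          l.getD j 0 ∈ Finset.Ioo d xL := by
        intro j hj
        simp only [Finset.mem_filter] at hj
        simp only [Finset.mem_Ioo]
        exact ⟨hj.2, hlt j hj.1⟩
      have := Finset.card_le_card_of_injOn (fun j => l.getD j 0) hmap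
        (fun j hj k hk heq => hinj j k (Finset.mem_of_mem_filter _ hj) (Finset.mem_of_mem_filter _ hk) heq)
      rw [Nat.card_Ioo] at this
      omega
    -- f2 : l.length - 1 ≤ c
    have hf2 : l.length ≤ c + 1 := by
      have hmap : ∀ j ∈ (Finset.Ioo i l.length).filter (fun j => ¬ d < l.getD j 0),
          l.getD j 0 ∈ Finset.Icc 1 d := by
        intro j hj
        simp only [Finset.mem_filter, Finset.mem_Ioo] at hj
        simp only [Finset.mem_Icc]
        exact ⟨part_pos hl hj.1.2, by omega⟩
      have h1 := Finset.card_le_card_of_injOn (fun j => l.getD j 0) hmap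
        (fun j hj k hk heq => hinj j k (Finset.mem_of_mem_filter _ hj) (Finset.mem_of_mem_filter _ hk) heq)
      have h2 := Finset.card_filter_add_card_filter_not
        (s := Finset.Ioo i l.length) (p := fun j => d < l.getD j 0)
      rw [Nat.card_Icc] at h1
      rw [Nat.card_Ioo] at h2
      omega
    -- segment structure for Q j := d < getD j
    have hseg := seg (fun j => d < l.getD j 0)
      (fun j k hj hjk hk hQ => by
        have := part_gap hl hjk hk
        omega) hg
    -- the two filters agree
    have hfil : (Finset.Ioo i l.length).filter (fun j => c < l.getD j 0 + j)
        = (Finset.Ioo i l.length).filter (fun j => d < l.getD j 0) := by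
      apply Finset.filter_congr
      intro j hj
      simp only [Finset.mem_Ioo] at hj
      constructor
      · -- c < β j → d < getD j
        intro hcb
        by_contra hnd
        -- j ≥ i + g + 1
        have hjg : ¬ j ≤ i + g := fun hle => hnd ((hseg j hj.1 hj.2).mpr hle)
        have hm : i + g + 1 < l.length := by omega
        have hmQ : ¬ d < l.getD (i+g+1) 0 := by
          intro hQ
          have := (hseg (i+g+1) (by omega) hm).mp hQ
          omega
        have hmne : l.getD (i+g+1) 0 ≠ d := hned _ (by simp only [Finset.mem_Ioo]; omega)
        have hgap := part_gap hl (show i + g + 1 ≤ j by omega) hj.2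
        omega
      · -- d < getD j → c < β j
        intro hdj
        have hjle : j ≤ i + g := (hseg j hj.1 hj.2).mp hdj
        have hgpos : 1 ≤ g := by omega
        have higL : i + g < l.length := by
          by_contra hL
          have h1 : g ≤ (Finset.Ioo i l.length).card :=
            Finset.card_le_card (Finset.filter_subset _ _)
          rw [Nat.card_Ioo] at h1
          omega
        have hQig : d < l.getD (i+g) 0 := (hseg (i+g) (by omega) higL).mpr (le_refl _)
        have hgap := part_gap hl hjle higL
        omega
    have hival : i ≤ c := by omega
    have hbval : c < xL + i := by omega
    have := h i c hi hival hbval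
    rw [shB hival hf2, hfil] at this
    have hshv : xL + i - c + g = b := by omega
    rw [← hg, hshv] at this
    exact this

lemma csyd_iff_nbarp (hl : IsStrictPartition l) {s : ℕ} : IsCSYD l s ↔ NBarP l s :=
  ⟨csyd_to_nbarp hl, nbarp_to_csyd hl⟩

end CSYDProof

namespace CSYDProof

open Finset

/-- Initial-segment lemma on `range L`. -/
lemma seg0 {L g : ℕ} (Q : ℕ → Prop) [DecidablePred Q]
    (mono : ∀ j k, j ≤ k → k < L → Q k → Q j)
    (hg : g = ((Finset.range L).filter Q).card) :
    ∀ j, j < L → (Q j ↔ j < g) := by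
  intro j hjL
  constructor
  · intro hQ
    have hsub : Finset.range (j+1) ⊆ (Finset.range L).filter Q := by
      intro k hk
      simp only [Finset.mem_range] at hk
      simp only [Finset.mem_filter, Finset.mem_range]
      exact ⟨by omega, mono k j (by omega) hjL hQ⟩
    have := Finset.card_le_card hsub
    rw [Finset.card_range] at this
    omega
  · intro hle
    by_contra hQ
    have hsub : (Finset.range L).filter Q ⊆ Finset.range j := by
      intro k hk
      simp only [Finset.mem_filter, Finset.mem_range] at hk
      simp only [Finset.mem_range]
      by_contra hkj
      exact hQ (mono j k (by omega) hk.1 hk.2)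
    have := Finset.card_le_card hsub
    rw [Finset.card_range] at this
    omega

variable {l : List ℕ}

lemma dd_length : (doubledDistinct l).length = l.getD 0 0 := by
  simp [doubledDistinct]

lemma dd_getD {i : ℕ} (hi : i < l.getD 0 0) :
    (doubledDistinct l).getD i 0 = ddPart l i := by
  have hlen : i < (doubledDistinct l).length := by rw [dd_length]; exact hi
  rw [List.getD_eq_getElem _ 0 hlen]
  simp [doubledDistinct]

lemma ddPart_lt {i : ℕ} (hi : i < l.length) : ddPart l i = l.getD i 0 + i + 1 := by
  simp [ddPart, hi]

lemma ddPart_ge {i : ℕ} (hi : l.length ≤ i) :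
    ddPart l i = ((Finset.range l.length).filter fun j => i + 1 ≤ l.getD j 0 + j).card := by
  simp [ddPart, Nat.not_lt.mpr hi]

lemma ddPart_le {i : ℕ} (hi : l.length ≤ i) : ddPart l i ≤ l.length := by
  rw [ddPart_ge hi]
  calc ((Finset.range l.length).filter fun j => i + 1 ≤ l.getD j 0 + j).card
      ≤ (Finset.range l.length).card := Finset.card_le_card (Finset.filter_subset _ _)
    _ = l.length := Finset.card_range _

/-- For a tail row `i ≥ ℓ`, membership threshold: `t < μᵢ ↔ i < βₜ`. -/
lemma lemC (hl : IsStrictPartition l) {i t : ℕ} (hi : l.length ≤ i) (ht : t < l.length) :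
    t < ddPart l i ↔ i + 1 ≤ l.getD t 0 + t := by
  have hs := seg0 (fun k => i + 1 ≤ l.getD k 0 + k)
    (fun j k hjk hk hQ => by have := beta_mono hl hjk hk; omega) (ddPart_ge hi)
  exact (hs t ht).symm

lemma len_le_head (hl : IsStrictPartition l) : l.length ≤ l.getD 0 0 := by
  rcases Nat.eq_zero_or_pos l.length with h | h
  · rw [h, getD_zero (by omega)]
  · have := len_le_beta hl h
    omega

lemma count_tail (hl : IsStrictPartition l) (t : ℕ) :
    ((Finset.Ico l.length (l.getD 0 0)).filter (fun i' => t < ddPart l i')).card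
      = if t < l.length then l.getD t 0 + t - l.length else 0 := by
  split_ifs with ht
  · have hβN : l.getD t 0 + t ≤ l.getD 0 0 := beta_le_head hl ht
    have hfil : (Finset.Ico l.length (l.getD 0 0)).filter (fun i' => t < ddPart l i')
        = Finset.Ico l.length (l.getD t 0 + t) := by
      ext i'
      simp only [Finset.mem_filter, Finset.mem_Ico]
      constructor
      · rintro ⟨⟨h1, h2⟩, h3⟩
        have := (lemC hl h1 ht).mp h3
        exact ⟨h1, by omega⟩
      · rintro ⟨h1, h2⟩
        exact ⟨⟨h1, by omega⟩, (lemC hl h1 ht).mpr (by omega)⟩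
    rw [hfil, Nat.card_Ico]
  · have hfil : (Finset.Ico l.length (l.getD 0 0)).filter (fun i' => t < ddPart l i') = ∅ := by
      apply Finset.filter_false_of_mem
      intro i' hi'
      simp only [Finset.mem_Ico] at hi'
      have := ddPart_le (l := l) (i := i') hi'.1
      omega
    rw [hfil]
    rfl

lemma count_full (hl : IsStrictPartition l) {i : ℕ} (t : ℕ) (hiL : i < l.length) :
    ((Finset.Ioo i (l.getD 0 0)).filter (fun i' => t < ddPart l i')).card
      = ((Finset.Ioo i l.length).filter (fun i' => t < ddPart l i')).card
        + (if t < l.length then l.getD t 0 + t - l.length else 0) := by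
  have hLN : l.length ≤ l.getD 0 0 := len_le_head hl
  have hsplit : Finset.Ioo i l.length ∪ Finset.Ico l.length (l.getD 0 0)
      = Finset.Ioo i (l.getD 0 0) := by
    ext k
    simp only [Finset.mem_union, Finset.mem_Ioo, Finset.mem_Ico]
    omega
  rw [← hsplit, Finset.filter_union, Finset.card_union_of_disjoint, count_tail hl t]
  apply Finset.disjoint_filter_filter
  rw [Finset.disjoint_left]
  intro a ha hb
  simp only [Finset.mem_Ioo] at ha
  simp only [Finset.mem_Ico] at hb
  omega

lemma hook_eq {i : ℕ} (j : ℕ) (hi : i < l.getD 0 0) :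
    hookLen (doubledDistinct l) i j = (ddPart l i - j) +
      ((Finset.Ioo i (l.getD 0 0)).filter (fun i' => j < ddPart l i')).card := by
  unfold hookLen
  rw [dd_length, dd_getD hi]
  congr 1
  apply congrArg
  apply Finset.filter_congr
  intro i' hi'
  simp only [Finset.mem_Ioo] at hi'
  rw [dd_getD hi'.2]

lemma row_lt_head (hl : IsStrictPartition l) {i : ℕ} (hi : i < l.length) :
    i < l.getD 0 0 := by
  have h1 := len_le_beta hl hi
  have h2 := beta_le_head hl hi
  omega

lemma hookUpper (hl : IsStrictPartition l) {i c : ℕ} (hi : i < l.length) (hic : i ≤ c)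
    (hc : c < l.getD i 0 + i) :
    hookLen (doubledDistinct l) i (c+1) = shiftedHook l i c := by
  have hiN : i < l.getD 0 0 := row_lt_head hl hi
  rw [hook_eq (c+1) hiN, count_full hl (c+1) hi, ddPart_lt hi]
  have hhead : ((Finset.Ioo i l.length).filter (fun i' => c + 1 < ddPart l i'))
      = ((Finset.Ioo i l.length).filter (fun i' => c < l.getD i' 0 + i')) := by
    apply Finset.filter_congr
    intro i' hi'
    simp only [Finset.mem_Ioo] at hi'
    rw [ddPart_lt hi'.2]
    constructor <;> intro h <;> omega
  rw [hhead]
  by_cases hcase : c + 1 < l.length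
  · -- Case A
    rw [shA hl hic hcase, if_pos hcase]
    have hall : ((Finset.Ioo i l.length).filter (fun i' => c < l.getD i' 0 + i'))
        = Finset.Ioo i l.length := by
      apply Finset.filter_true_of_mem
      intro i' hi'
      simp only [Finset.mem_Ioo] at hi'
      rcases le_or_gt i' (c+1) with h | h
      · have := part_gap hl h hcase
        have := part_pos hl hcase
        omega
      · have := part_pos hl hi'.2
        omega
    rw [hall, Nat.card_Ioo]
    have h1 := len_le_beta hl hcase
    have h2 := part_pos hl hcase
    omega
  · -- Case B
    rw [shB hic (by omega), if_neg (by omega)]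
    omega

lemma hookDiag (hl : IsStrictPartition l) {i : ℕ} (hi : i < l.length) :
    hookLen (doubledDistinct l) i i = 2 * l.getD i 0 := by
  have hiN : i < l.getD 0 0 := row_lt_head hl hi
  rw [hook_eq i hiN, count_full hl i hi, ddPart_lt hi, if_pos hi]
  have hall : ((Finset.Ioo i l.length).filter (fun i' => i < ddPart l i'))
      = Finset.Ioo i l.length := by
    apply Finset.filter_true_of_mem
    intro i' hi'
    simp only [Finset.mem_Ioo] at hi'
    rw [ddPart_lt hi'.2]
    omega
  rw [hall, Nat.card_Ioo]
  have h1 := len_le_beta hl hi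
  omega

lemma hookLow (hl : IsStrictPartition l) {i j : ℕ} (hj : j < i) (hi : i < l.length) :
    hookLen (doubledDistinct l) i j = l.getD i 0 + l.getD j 0 := by
  have hiN : i < l.getD 0 0 := row_lt_head hl hi
  rw [hook_eq j hiN, count_full hl j hi, ddPart_lt hi, if_pos (by omega)]
  have hall : ((Finset.Ioo i l.length).filter (fun i' => j < ddPart l i'))
      = Finset.Ioo i l.length := by
    apply Finset.filter_true_of_mem
    intro i' hi'
    simp only [Finset.mem_Ioo] at hi'
    rw [ddPart_lt hi'.2]
    omega
  rw [hall, Nat.card_Ioo]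
  have h1 := len_le_beta hl hi
  have h2 := len_le_beta hl (show j < l.length by omega)
  omega

lemma hookTail (hl : IsStrictPartition l) {i j : ℕ} (hiL : l.length ≤ i)
    (hiN : i < l.getD 0 0) (hj : j < ddPart l i) :
    hookLen (doubledDistinct l) i j = shiftedHook l j i := by
  have hjL : j < l.length := by have := ddPart_le hiL; omega
  have hjβ : i + 1 ≤ l.getD j 0 + j := (lemC hl hiL hjL).mp hj
  have hβN : l.getD j 0 + j ≤ l.getD 0 0 := beta_le_head hl hjL
  rw [hook_eq j hiN, shB (by omega) (by omega)]
  -- tail count : filter over Ioo i N equals Ioo i (β j)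
  have hfil : ((Finset.Ioo i (l.getD 0 0)).filter (fun i' => j < ddPart l i'))
      = Finset.Ioo i (l.getD j 0 + j) := by
    ext i'
    simp only [Finset.mem_filter, Finset.mem_Ioo]
    constructor
    · rintro ⟨⟨h1, h2⟩, h3⟩
      have := (lemC hl (by omega) hjL).mp h3
      exact ⟨h1, by omega⟩
    · rintro ⟨h1, h2⟩
      exact ⟨⟨h1, by omega⟩, (lemC hl (by omega) hjL).mpr (by omega)⟩
  rw [hfil, Nat.card_Ioo]
  -- shifted-hook count : filter over Ioo j L equals Ioo j (ddPart l i)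
  have hseg := seg0 (fun k => i + 1 ≤ l.getD k 0 + k)
    (fun a b hab hb hQ => by have := beta_mono hl hab hb; omega) (ddPart_ge hiL)
  have hfil2 : ((Finset.Ioo j l.length).filter (fun k => i < l.getD k 0 + k))
      = Finset.Ioo j (ddPart l i) := by
    ext k
    simp only [Finset.mem_filter, Finset.mem_Ioo]
    have hdL := ddPart_le (l := l) hiL
    constructor
    · rintro ⟨⟨h1, h2⟩, h3⟩
      have := (hseg k h2).mp (by omega)
      exact ⟨h1, by omega⟩
    · rintro ⟨h1, h2⟩
      have hkL : k < l.length := by omega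
      have := (hseg k hkL).mpr (by omega)
      exact ⟨⟨h1, hkL⟩, by omega⟩
  rw [hfil2, Nat.card_Ioo]
  omega

/-- Main equivalence: `λλ` is an `s`-core iff `λ` is an `s`-CSYD and no `2λᵢ` is
divisible by `s`. -/
lemma core_iff (hl : IsStrictPartition l) {s : ℕ} :
    IsCore (doubledDistinct l) s ↔
      (IsCSYD l s ∧ ∀ i, i < l.length → ¬ s ∣ 2 * l.getD i 0) := by
  constructor
  · intro h
    constructor
    · intro i c hi hic hc
      have hiN : i < l.getD 0 0 := row_lt_head hl hi
      have := h i (c+1) (by rw [dd_length]; exact hiN)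
        (by rw [dd_getD hiN, ddPart_lt hi]; omega)
      rwa [hookUpper hl hi hic hc] at this
    · intro i hi
      have hiN : i < l.getD 0 0 := row_lt_head hl hi
      have := h i i (by rw [dd_length]; exact hiN)
        (by rw [dd_getD hiN, ddPart_lt hi]; omega)
      rwa [hookDiag hl hi] at this
  · rintro ⟨hc, hd⟩ i j hi hj
    rw [dd_length] at hi
    rw [dd_getD hi] at hj
    by_cases hiL : i < l.length
    · rcases Nat.lt_trichotomy j i with hji | rfl | hij
      · rw [hookLow hl hji hiL]
        have hgap := part_gap hl (le_of_lt hji) hiL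
        have hi1 : i - 1 + 1 = i := by omega
        have := hc j (i-1) (by omega) (by omega) (by omega)
        rw [shA hl (by omega) (by omega), hi1] at this
        rwa [Nat.add_comm (l.getD i 0) (l.getD j 0)]
      · rw [hookDiag hl hiL]
        exact hd _ hiL
      · have hj1 : j - 1 + 1 = j := by omega
        rw [ddPart_lt hiL] at hj
        have := hc i (j-1) hiL (by omega) (by omega)
        rw [← hookUpper hl hiL (by omega) (by omega), hj1] at this
        exact this
    · have hiL' : l.length ≤ i := by omega
      rw [hookTail hl hiL' hi hj]
      have hjL : j < l.length := by have := ddPart_le hiL'; omega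
      have hjβ := (lemC hl hiL' hjL).mp hj
      exact hc j i hjL (by omega) (by omega)

end CSYDProof

namespace CSYDProof

open Finset

lemma list_sum_eq (m : List ℕ) : m.sum = ∑ i ∈ Finset.range m.length, m.getD i 0 := by
  induction m with
  | nil => simp
  | cons a t ih =>
    rw [List.sum_cons, List.length_cons, Finset.sum_range_succ']
    simp only [List.getD_cons_succ, List.getD_cons_zero]
    rw [ih]
    omega

variable {l : List ℕ}

lemma dd_sum (hl : IsStrictPartition l) : (doubledDistinct l).sum = 2 * l.sum := by
  set L := l.length with hL
  set N := l.getD 0 0 with hN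
  have hLN : L ≤ N := len_le_head hl
  have hmap : (doubledDistinct l).sum = ∑ i ∈ Finset.range N, ddPart l i := by
    rw [list_sum_eq, dd_length]
    apply Finset.sum_congr rfl
    intro i hi
    simp only [Finset.mem_range] at hi
    exact dd_getD hi
  have hsplit : ∑ i ∈ Finset.range N, ddPart l i
      = ∑ i ∈ Finset.range L, ddPart l i + ∑ i ∈ Finset.Ico L N, ddPart l i := by
    rw [Finset.range_eq_Ico,
      ← Finset.Ico_union_Ico_eq_Ico (Nat.zero_le L) hLN,
      Finset.sum_union (Finset.Ico_disjoint_Ico_consecutive 0 L N), Finset.range_eq_Ico]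
  have hhead : ∑ i ∈ Finset.range L, ddPart l i
      = ∑ i ∈ Finset.range L, (l.getD i 0 + i + 1) := by
    apply Finset.sum_congr rfl
    intro i hi
    simp only [Finset.mem_range] at hi
    exact ddPart_lt hi
  have htail : ∑ i ∈ Finset.Ico L N, ddPart l i
      = ∑ j ∈ Finset.range L, (l.getD j 0 + j - L) := by
    calc ∑ i ∈ Finset.Ico L N, ddPart l i
        = ∑ i ∈ Finset.Ico L N, ∑ j ∈ Finset.range L,
            (if i + 1 ≤ l.getD j 0 + j then 1 else 0) := by
          apply Finset.sum_congr rfl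
          intro i hi
          simp only [Finset.mem_Ico] at hi
          rw [ddPart_ge hi.1, Finset.card_filter]
      _ = ∑ j ∈ Finset.range L, ∑ i ∈ Finset.Ico L N,
            (if i + 1 ≤ l.getD j 0 + j then 1 else 0) := Finset.sum_comm
      _ = ∑ j ∈ Finset.range L, (l.getD j 0 + j - L) := by
          apply Finset.sum_congr rfl
          intro j hj
          simp only [Finset.mem_range] at hj
          rw [← Finset.card_filter]
          have hβN : l.getD j 0 + j ≤ N := beta_le_head hl hj
          have hfil : (Finset.Ico L N).filter (fun i => i + 1 ≤ l.getD j 0 + j)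
              = Finset.Ico L (l.getD j 0 + j) := by
            ext i
            simp only [Finset.mem_filter, Finset.mem_Ico]
            omega
          rw [hfil, Nat.card_Ico]
  rw [hmap, hsplit, hhead, htail, list_sum_eq l, ← hL]
  -- arithmetic
  have e1 : ∑ i ∈ Finset.range L, (l.getD i 0 + i + 1)
      = (∑ i ∈ Finset.range L, l.getD i 0) + (∑ i ∈ Finset.range L, i) + L := by
    rw [Finset.sum_add_distrib, Finset.sum_add_distrib, Finset.sum_const, Finset.card_range,
      smul_eq_mul, mul_one]
  have e2 : ∑ j ∈ Finset.range L, (l.getD j 0 + j - L) + L * L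
      = (∑ i ∈ Finset.range L, l.getD i 0) + (∑ i ∈ Finset.range L, i) := by
    have : ∑ j ∈ Finset.range L, ((l.getD j 0 + j - L) + L)
        = ∑ j ∈ Finset.range L, (l.getD j 0 + j) := by
      apply Finset.sum_congr rfl
      intro j hj
      simp only [Finset.mem_range] at hj
      have := len_le_beta hl hj
      omega
    rw [Finset.sum_add_distrib, Finset.sum_const, Finset.card_range, smul_eq_mul] at this
    rw [Finset.sum_add_distrib] at this
    omega
  have e3 : (∑ i ∈ Finset.range L, i) * 2 + L = L * L := by
    cases L with
    | zero => simp
    | succ k =>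
      rw [Finset.sum_range_id_mul_two]
      have hk : k + 1 - 1 = k := rfl
      rw [hk]
      ring
  omega
end CSYDProof

namespace CSYDProof

variable {l : List ℕ}

/-- KEY: if no bar length is divisible by `2h`, any part divisible by `h` equals `h`. -/
lemma key_mult (hl : IsStrictPartition l) {h : ℕ} (hh : 0 < h) (hnb : NBarP l (2*h)) :
    ∀ x, x ∈ l → h ∣ x → x = h := by
  intro x
  induction x using Nat.strong_induction_on with
  | _ x ih =>
    intro hx hdvd
    obtain ⟨k, hk⟩ := hdvd
    have hxpos : 0 < x := hl.2 x hx
    have hk1 : k ≠ 0 := by rintro rfl; omega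
    rcases Nat.even_or_odd k with ⟨m, hm⟩ | ⟨m, hm⟩
    · exfalso
      subst hm; subst hk
      have hdvd2 : 2 * h ∣ h * (m + m) := ⟨m, by ring⟩
      refine hnb.2 _ hx _ (by omega) (le_refl _) ?_ hdvd2
      intro y hy hyx
      have := hl.2 y hy
      omega
    · subst hm; subst hk
      rcases Nat.eq_zero_or_pos m with rfl | hm1
      · simp
      · exfalso
        have hxe : h * (2 * m + 1) = 2 * (h * m) + h := by ring
        have hhm : h ≤ h * m := Nat.le_mul_of_pos_right h hm1
        have h2hx : 2 * h ≤ h * (2 * m + 1) := by omega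
        have hne : ¬ ∀ y ∈ l, y < h * (2 * m + 1) → h * (2 * m + 1) - y ≠ 2 * h := by
          intro hall
          exact hnb.2 _ hx (2*h) (by omega) h2hx hall (dvd_refl _)
        push_neg at hne
        obtain ⟨y, hy, hyx, hxy⟩ := hne
        have hydvd : h ∣ y := by
          have hyeq : y = h * (2 * m + 1) - 2 * h := by omega
          rw [hyeq]
          exact Nat.dvd_sub ⟨2*m+1, rfl⟩ ⟨2, by ring⟩
        have hyh : y = h := ih y (by omega) hy hydvd
        subst hyh
        refine hnb.1 _ hx _ hy (by omega) ⟨m + 1, by ring⟩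

lemma erase_strict (hl : IsStrictPartition l) (a : ℕ) : IsStrictPartition (l.erase a) :=
  ⟨hl.1.erase a, fun x hx => hl.2 x (List.mem_of_mem_erase hx)⟩

lemma nodup (hl : IsStrictPartition l) : l.Nodup := hl.1.nodup

lemma mem_erase_iff (hl : IsStrictPartition l) {a x : ℕ} :
    x ∈ l.erase a ↔ x ∈ l ∧ x ≠ a := by
  rw [(nodup hl).mem_erase_iff]
  tauto

lemma dvd_two_mul_iff {h x : ℕ} : 2 * h ∣ 2 * x ↔ h ∣ x := by
  constructor
  · rintro ⟨c, hc⟩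
    rw [mul_assoc] at hc
    exact ⟨c, by omega⟩
  · rintro ⟨c, hc⟩
    exact ⟨c, by rw [hc]; ring⟩

/-- Claim 1: if `h ∉ l` and `l` has no bar length divisible by `2h`, then no doubled part
is divisible by `2h`. -/
lemma claimA (hl : IsStrictPartition l) {h : ℕ} (hh : 0 < h) (hnot : h ∉ l)
    (hnb : NBarP l (2*h)) : ∀ x ∈ l, ¬ (2*h) ∣ 2*x := by
  intro x hx hdvd
  exact hnot (key_mult hl hh hnb x hx (dvd_two_mul_iff.mp hdvd) ▸ hx)

/-- Claim 2, forward. -/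
lemma claimB_fwd (hl : IsStrictPartition l) {h : ℕ} (hh : 0 < h) (hmem : h ∈ l)
    (hnb : NBarP l (2*h)) :
    NBarP (l.erase h) (2*h) ∧ ∀ x ∈ l.erase h, ¬ (2*h) ∣ 2*x := by
  refine ⟨⟨?_, ?_⟩, ?_⟩
  · intro x hx y hy hxy
    exact hnb.1 x (List.mem_of_mem_erase hx) y (List.mem_of_mem_erase hy) hxy
  · intro x hx b hb1 hbx hall hdvd
    have hxl : x ∈ l := List.mem_of_mem_erase hx
    by_cases hcase : ∀ y ∈ l, y < x → x - y ≠ b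
    · exact hnb.2 x hxl b hb1 hbx hcase hdvd
    · push_neg at hcase
      obtain ⟨y, hy, hyx, hxy⟩ := hcase
      have hyh : y = h := by
        by_contra hne
        exact hall y ((mem_erase_iff hl).mpr ⟨hy, hne⟩) hyx hxy
      rw [hyh] at hyx hxy
      -- x = b + h with 2h ∣ b, so h ∣ x and x ≠ h
      have hbge : 2*h ≤ b := Nat.le_of_dvd (by omega) hdvd
      have hhx : h ∣ x := by
        have hxe : x = b + h := by omega
        rw [hxe]
        exact Nat.dvd_add (dvd_trans ⟨2, by ring⟩ hdvd) (dvd_refl h)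
      have := key_mult hl hh hnb x hxl hhx
      have hxh := ((mem_erase_iff hl).mp hx).2
      omega
  · intro x hx hdvd
    have hxh := key_mult hl hh hnb x (List.mem_of_mem_erase hx) (dvd_two_mul_iff.mp hdvd)
    exact ((mem_erase_iff hl).mp hx).2 hxh

/-- Claim 2, backward. -/
lemma claimB_bwd (hl : IsStrictPartition l) {h : ℕ} (hh : 0 < h) (hmem : h ∈ l)
    (hnb : NBarP (l.erase h) (2*h)) (hnd : ∀ x ∈ l.erase h, ¬ (2*h) ∣ 2*x) :
    NBarP l (2*h) := by
  constructor
  · intro x hx y hy hxy hdvd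
    by_cases hxh : x = h
    · have hy1 := hl.2 y hy
      have := Nat.le_of_dvd (by omega) hdvd
      omega
    · have hxe : x ∈ l.erase h := (mem_erase_iff hl).mpr ⟨hx, hxh⟩
      by_cases hyh : y = h
      · rw [hyh] at hdvd hxy
        -- 2h ∣ x + h  →  h ∣ x → 2h ∣ 2x, contradiction
        obtain ⟨c, hc⟩ := hdvd
        have hc1 : c ≠ 0 := by rintro rfl; omega
        apply hnd x hxe
        obtain ⟨d, rfl⟩ : ∃ d, c = d + 1 := ⟨c - 1, by omega⟩
        refine ⟨2*d + 1, ?_⟩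
        have e1 : 2*h*(d+1) = 2*(h*d) + 2*h := by ring
        have e3 : 2*h*(2*d+1) = 4*(h*d) + 2*h := by ring
        omega
      · exact hnb.1 x hxe y ((mem_erase_iff hl).mpr ⟨hy, hyh⟩) hxy hdvd
  · intro x hx b hb1 hbx hall hdvd
    by_cases hxh : x = h
    · have := Nat.le_of_dvd (by omega) hdvd
      omega
    · exact hnb.2 x ((mem_erase_iff hl).mpr ⟨hx, hxh⟩) b hb1 hbx
        (fun y hy hyx => hall y (List.mem_of_mem_erase hy) hyx) hdvd

/-- Bridge: membership form of the second component of `core_iff`. -/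
lemma core_iff' (hl : IsStrictPartition l) {s : ℕ} :
    IsCore (doubledDistinct l) s ↔ (NBarP l s ∧ ∀ x ∈ l, ¬ s ∣ 2*x) := by
  rw [core_iff hl, csyd_iff_nbarp hl]
  constructor
  · rintro ⟨h1, h2⟩
    refine ⟨h1, ?_⟩
    intro x hx
    obtain ⟨i, hi, rfl⟩ := mem_iff_part.mp hx
    exact h2 i hi
  · rintro ⟨h1, h2⟩
    exact ⟨h1, fun i hi => h2 _ (mem_iff_part.mpr ⟨i, hi, rfl⟩)⟩

/-- Main pointwise equivalence, case `h ∉ l`. -/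
lemma equiv_notmem (hl : IsStrictPartition l) {h : ℕ} (hh : 0 < h) (hnot : h ∉ l) :
    IsCSYD l (2*h) ↔ IsCore (doubledDistinct l) (2*h) := by
  rw [core_iff' hl, csyd_iff_nbarp hl]
  constructor
  · intro hnb
    exact ⟨hnb, claimA hl hh hnot hnb⟩
  · exact fun h => h.1

/-- Main pointwise equivalence, case `h ∈ l`. -/
lemma equiv_mem (hl : IsStrictPartition l) {h : ℕ} (hh : 0 < h) (hmem : h ∈ l) :
    IsCSYD l (2*h) ↔ IsCore (doubledDistinct (l.erase h)) (2*h) := by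
  rw [core_iff' (erase_strict hl h), csyd_iff_nbarp hl]
  constructor
  · intro hnb
    exact claimB_fwd hl hh hmem hnb
  · rintro ⟨h1, h2⟩
    exact claimB_bwd hl hh hmem h1 h2

/-- A doubled distinct `2h`-core has no part equal to `h`. -/
lemma core_no_h (hl : IsStrictPartition l) {h : ℕ} (hh : 0 < h)
    (hc : IsCore (doubledDistinct l) (2*h)) : h ∉ l := by
  intro hmem
  exact ((core_iff' hl).mp hc).2 h hmem (dvd_refl _)

end CSYDProof

namespace CSYDProof

/-- Sorted insertion into a strictly decreasing list. -/
def insIn (h : ℕ) : List ℕ → List ℕ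
  | [] => [h]
  | a :: t => if h < a then a :: insIn h t else h :: a :: t

lemma insIn_perm (h : ℕ) (m : List ℕ) : List.Perm (insIn h m) (h :: m) := by
  induction m with
  | nil => exact List.Perm.refl _
  | cons a t ih =>
    simp only [insIn]
    split_ifs with hc
    · exact (ih.cons a).trans (List.Perm.swap h a t)
    · exact List.Perm.refl _

lemma insIn_sorted {m : List ℕ} {h : ℕ} (hm : List.Pairwise (·>·) m) (hnot : h ∉ m) :
    List.Pairwise (·>·) (insIn h m) := by
  induction m with
  | nil => simp [insIn]
  | cons a t ih =>
    rw [List.pairwise_cons] at hm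
    simp only [insIn]
    split_ifs with hc
    · rw [List.pairwise_cons]
      refine ⟨?_, ih hm.2 (fun ht => hnot (List.mem_cons_of_mem a ht))⟩
      intro b hb
      rcases List.mem_cons.mp ((insIn_perm h t).mem_iff.mp hb) with rfl | hbt
      · exact hc
      · exact hm.1 b hbt
    · have hne : h ≠ a := fun he => hnot (he ▸ List.mem_cons_self)
      have hha : a < h := by omega
      rw [List.pairwise_cons]
      refine ⟨?_, List.pairwise_cons.mpr hm⟩
      intro b hb
      rcases List.mem_cons.mp hb with rfl | hbt
      · exact hha
      · exact lt_trans (hm.1 b hbt) hha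

lemma insIn_mem (h : ℕ) (m : List ℕ) : h ∈ insIn h m :=
  (insIn_perm h m).mem_iff.mpr List.mem_cons_self

lemma insIn_strict {m : List ℕ} {h : ℕ} (hm : IsStrictPartition m) (hh : 0 < h)
    (hnot : h ∉ m) : IsStrictPartition (insIn h m) := by
  refine ⟨insIn_sorted hm.1 hnot, ?_⟩
  intro x hx
  rcases List.mem_cons.mp ((insIn_perm h m).mem_iff.mp hx) with rfl | hxm
  · exact hh
  · exact hm.2 x hxm

lemma insIn_erase {m : List ℕ} {h : ℕ} (hm : IsStrictPartition m) (hnot : h ∉ m) :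
    (insIn h m).erase h = m := by
  have hp : List.Perm ((insIn h m).erase h) m := by
    have := (insIn_perm h m).erase h
    rwa [List.erase_cons_head] at this
  exact List.Perm.eq_of_pairwise (fun a b _ _ h1 h2 => absurd h1 (lt_asymm h2)) ((insIn_sorted hm.1 hnot).erase h) hm.1 hp

lemma insIn_sum (h : ℕ) (m : List ℕ) : (insIn h m).sum = h + m.sum := by
  rw [(insIn_perm h m).sum_eq, List.sum_cons]

lemma erase_sum {l : List ℕ} {h : ℕ} (hmem : h ∈ l) : (l.erase h).sum + h = l.sum := by
  have := (List.perm_cons_erase hmem).sum_eq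
  rw [List.sum_cons] at this
  omega

lemma mem_le_sum {l : List ℕ} {x : ℕ} (hx : x ∈ l) : x ≤ l.sum :=
  List.single_le_sum (fun _ _ => Nat.zero_le _) x hx

lemma finite_part (n : ℕ) (P : List ℕ → Prop) :
    {l : List ℕ | IsStrictPartition l ∧ l.sum = n ∧ P l}.Finite := by
  have hinj : Set.InjOn (fun l : List ℕ => l.toFinset)
      {l : List ℕ | IsStrictPartition l ∧ l.sum = n ∧ P l} := by
    rintro l1 hl1 l2 hl2 he
    have p : List.Perm l1 l2 :=
      List.perm_of_nodup_nodup_toFinset_eq (nodup hl1.1) (nodup hl2.1) he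
    exact List.Perm.eq_of_pairwise (fun a b _ _ h1 h2 => absurd h1 (lt_asymm h2)) hl1.1.1 hl2.1.1 p
  apply Set.Finite.of_finite_image _ hinj
  apply Set.Finite.subset ((Finset.range (n+1)).powerset : Finset (Finset ℕ)).finite_toSet
  rintro F ⟨l, hl, rfl⟩
  simp only [Finset.coe_powerset, Set.mem_preimage, Set.mem_powerset_iff, Finset.coe_range]
  intro x hx
  rw [Finset.mem_coe, List.mem_toFinset] at hx
  have := mem_le_sum hx
  have hsum := hl.2.1
  simp only [Set.mem_Iio]
  omega

end CSYDProof

/-- For an even positive integer `s` and every `n`,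
`cs_s(n) = dd_s(2n) + dd_s(2n − s)` (the last term being `0` when `2n − s < 0`), where
`cs_s(n)` counts strict partitions of size `n` that are `s`-CSYDs and `dd_s(m)` counts
doubled distinct `s`-cores of size `m`. -/
theorem cs_eq_dd_add_dd (s : ℕ) (hs : 0 < s) (hse : Even s) (n : ℕ) :
    {l : List ℕ | IsStrictPartition l ∧ l.sum = n ∧ IsCSYD l s}.ncard =
      {l : List ℕ | IsStrictPartition l ∧ (doubledDistinct l).sum = 2 * n ∧
        IsCore (doubledDistinct l) s}.ncard +
      if s ≤ 2 * n then
        {l : List ℕ | IsStrictPartition l ∧ (doubledDistinct l).sum = 2 * n - s ∧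
          IsCore (doubledDistinct l) s}.ncard
      else 0 := by
  classical
  open CSYDProof in
  obtain ⟨h, rfl⟩ := hse
  have hh : 0 < h := by omega
  have h2 : h + h = 2 * h := by ring
  rw [h2]
  set A := {l : List ℕ | IsStrictPartition l ∧ l.sum = n ∧ IsCSYD l (2*h)} with hA
  set A0 := A ∩ {l : List ℕ | h ∉ l} with hA0
  set A1 := A ∩ {l : List ℕ | h ∈ l} with hA1
  have hfinA : A.Finite := CSYDProof.finite_part n _
  have hsplit : A = A0 ∪ A1 := by
    ext l
    simp only [hA0, hA1, Set.mem_union, Set.mem_inter_iff, Set.mem_setOf_eq]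
    tauto
  have hdisj : Disjoint A0 A1 := by
    rw [Set.disjoint_left]
    rintro l ⟨hl1, hl2⟩ ⟨hl3, hl4⟩
    exact hl2 hl4
  have hkey : A.ncard = A0.ncard + A1.ncard := by
    conv_lhs => rw [hsplit]
    exact Set.ncard_union_eq hdisj (hfinA.subset Set.inter_subset_left)
      (hfinA.subset Set.inter_subset_left)
  have hB0 : {l : List ℕ | IsStrictPartition l ∧ (doubledDistinct l).sum = 2 * n ∧
      IsCore (doubledDistinct l) (2*h)} = A0 := by
    ext l
    simp only [hA0, hA, Set.mem_inter_iff, Set.mem_setOf_eq]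
    constructor
    · rintro ⟨h1, h2', h3⟩
      have hds := CSYDProof.dd_sum h1
      have hno : h ∉ l := CSYDProof.core_no_h h1 hh h3
      exact ⟨⟨h1, by omega, (CSYDProof.equiv_notmem h1 hh hno).mpr h3⟩, hno⟩
    · rintro ⟨⟨h1, h2', h3⟩, hno⟩
      have hds := CSYDProof.dd_sum h1
      exact ⟨h1, by omega, (CSYDProof.equiv_notmem h1 hh hno).mp h3⟩
  by_cases hc : 2 * h ≤ 2 * n
  · rw [if_pos hc]
    have hC1 : {l : List ℕ | IsStrictPartition l ∧ (doubledDistinct l).sum = 2 * n - 2*h ∧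
        IsCore (doubledDistinct l) (2*h)} = (fun l : List ℕ => l.erase h) '' A1 := by
      ext m
      simp only [hA1, hA, Set.mem_image, Set.mem_inter_iff, Set.mem_setOf_eq]
      constructor
      · rintro ⟨h1, h2', h3⟩
        have hds := CSYDProof.dd_sum h1
        have hno : h ∉ m := CSYDProof.core_no_h h1 hh h3
        have hstrict := CSYDProof.insIn_strict h1 hh hno
        have herase := CSYDProof.insIn_erase h1 hno
        refine ⟨CSYDProof.insIn h m, ⟨⟨hstrict, ?_, ?_⟩, CSYDProof.insIn_mem h m⟩, herase⟩
        · rw [CSYDProof.insIn_sum]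
          omega
        · rw [CSYDProof.equiv_mem hstrict hh (CSYDProof.insIn_mem h m), herase]
          exact h3
      · rintro ⟨l, ⟨⟨h1, hsum, hcs⟩, hmem⟩, rfl⟩
        have hstrict := CSYDProof.erase_strict h1 h
        have hds := CSYDProof.dd_sum hstrict
        have hesum := CSYDProof.erase_sum hmem
        refine ⟨hstrict, by omega, ?_⟩
        exact (CSYDProof.equiv_mem h1 hh hmem).mp hcs
    have hinj : Set.InjOn (fun l : List ℕ => l.erase h) A1 := by
      rintro l1 hl1 l2 hl2 he
      simp only [hA1, hA, Set.mem_inter_iff, Set.mem_setOf_eq] at hl1 hl2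
      have p1 := List.perm_cons_erase hl1.2
      have p2 := List.perm_cons_erase hl2.2
      simp only at he
      rw [he] at p1
      exact List.Perm.eq_of_pairwise (fun a b _ _ h1 h2 => absurd h1 (lt_asymm h2)) hl1.1.1.1 hl2.1.1.1 (p1.trans p2.symm)
    rw [hB0, hC1, Set.ncard_image_of_injOn hinj]
    exact hkey
  · rw [if_neg hc]
    have hA1e : A1 = ∅ := by
      ext l
      simp only [hA1, hA, Set.mem_inter_iff, Set.mem_setOf_eq, Set.mem_empty_iff_false,
        iff_false, not_and]
      rintro ⟨h1, hsum, hcs⟩ hmem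
      have := CSYDProof.mem_le_sum hmem
      omega
    rw [hB0]
    have : A0 = A := by
      rw [hsplit, hA1e, Set.union_empty]
    rw [this, Nat.add_zero]
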